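/- Let G₁ and G₂ be groups and let a be a nontrivial element of G₁. Then the centralizer of inl(a) in the free product G₁ ∗ G₂ is contained in the image of the canonical injection inl : G₁ → G₁ ∗ G₂. -/

import Mathlib

/-!
Let `x` commute with `a ≠ 1`, or more generally satisfy `b * x = x * a` with `a, b ≠ 1` in the
same factor `Gᵢ`, and write `x` as a reduced word. If its first or last letter `m` lies in `Gᵢ`,
peeling it off leaves a shorter word satisfying the same kind of relation, with `b` or `a`
replaced by a conjugate under `m`. Otherwise, if `x ≠ 1`, both `b * x` and `x * a` are reduced
words as they stand, and they start in different factors, so they cannot be equal. Hence `x` is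
a single letter of `Gᵢ`.
-/

open Monoid

namespace Monoid.CoprodI.Word

variable {ι : Type*} {M : ι → Type*} [∀ i, Monoid (M i)]

def lastIdx (w : Word M) : Option ι :=
  w.toList.getLast?.map Sigma.fst

theorem prod_injective : Function.Injective (prod : Word M → CoprodI M) := by
  classical
  exact equiv.symm.injective

theorem exists_prod_eq_mul_of_toList_eq_append {w : Word M} {l₁ l₂ : List (Σ i, M i)}
    (h : w.toList = l₁ ++ l₂) :
    ∃ w₁ w₂ : Word M, w₁.toList = l₁ ∧ w₂.toList = l₂ ∧ w.prod = w₁.prod * w₂.prod := by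
  have hne := w.ne_one
  have hch := w.chain_ne
  rw [h] at hne hch
  refine ⟨⟨l₁, fun p hp => hne p (List.mem_append_left _ hp), hch.left_of_append⟩,
    ⟨l₂, fun p hp => hne p (List.mem_append_right _ hp), hch.right_of_append⟩, rfl, rfl, ?_⟩
  simp [prod, h]

theorem exists_prod_eq_of_mul_of_fstIdx_eq {w : Word M} {i : ι} (h : w.fstIdx = some i) :
    ∃ (m : M i) (w' : Word M), w'.toList.length < w.toList.length ∧ w.prod = of m * w'.prod := by
  obtain ⟨⟨j, m⟩, l, hw⟩ := List.exists_cons_of_ne_nil (l := w.toList) (by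
    rintro hw; simp [fstIdx, hw] at h)
  obtain rfl : j = i := by simpa [fstIdx, hw] using h
  obtain ⟨w₁, w₂, hw₁, hw₂, hprod⟩ := exists_prod_eq_mul_of_toList_eq_append (l₁ := [⟨j, m⟩]) hw
  exact ⟨m, w₂, by simp [hw, hw₂], by rw [hprod]; simp [prod, hw₁]⟩

theorem exists_prod_eq_mul_of_of_lastIdx_eq {w : Word M} {i : ι} (h : w.lastIdx = some i) :
    ∃ (w' : Word M) (m : M i), w'.toList.length < w.toList.length ∧ w.prod = w'.prod * of m := by
  obtain ⟨l, ⟨j, m⟩, hw⟩ := List.eq_nil_or_concat' w.toList |>.resolve_left (by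
    rintro hw; simp [lastIdx, hw] at h)
  obtain rfl : j = i := by simpa [lastIdx, hw] using h
  obtain ⟨w₁, w₂, hw₁, hw₂, hprod⟩ := exists_prod_eq_mul_of_toList_eq_append hw
  exact ⟨w₁, m, by simp [hw, hw₁], by rw [hprod]; simp [prod, hw₂]⟩

def snoc {i : ι} (w : Word M) (m : M i) (hw : w.lastIdx ≠ some i) (h1 : m ≠ 1) : Word M where
  toList := w.toList ++ [⟨i, m⟩]
  ne_one := by
    simp only [List.mem_append, List.mem_singleton]
    rintro l (hl | rfl)
    · exact w.ne_one l hl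
    · exact h1
  chain_ne := w.chain_ne.append (List.isChain_singleton _) (by
    rintro l hl y hy hly
    obtain rfl : ⟨i, m⟩ = y := by simpa using hy
    exact hw (by simp [lastIdx, Option.mem_def.mp hl, hly]))

theorem prod_snoc {i : ι} (w : Word M) (m : M i) (hw : w.lastIdx ≠ some i) (h1 : m ≠ 1) :
    (w.snoc m hw h1).prod = w.prod * of m := by
  simp [snoc, prod]

theorem fstIdx_snoc {i : ι} (w : Word M) (m : M i) (hw : w.lastIdx ≠ some i) (h1 : m ≠ 1)
    (hw₀ : w.toList ≠ []) : (w.snoc m hw h1).fstIdx = w.fstIdx := by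
  obtain ⟨p, l, hl⟩ := List.exists_cons_of_ne_nil hw₀
  simp [snoc, fstIdx, hl]

section Group

variable {G : ι → Type*} [∀ i, Group (G i)]

theorem of_mul_prod_ne_prod_mul_of {i : ι} {b c : G i} (hb : b ≠ 1) (hc : c ≠ 1) (w : Word G)
    (hw₀ : w.toList ≠ []) (hfst : w.fstIdx ≠ some i) (hlast : w.lastIdx ≠ some i) :
    of b * w.prod ≠ w.prod * of c := by
  intro h
  rw [← prod_cons i b w hb hfst, ← prod_snoc w c hlast hc] at h
  have hidx := congrArg fstIdx (prod_injective h)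
  rw [fstIdx_cons, fstIdx_snoc w c hlast hc hw₀] at hidx
  exact hfst hidx.symm

theorem prod_mem_range_of_of_mul_eq_mul_of {i : ι} (w : Word G) {a b : G i} (ha : a ≠ 1)
    (hb : b ≠ 1) (h : of b * w.prod = w.prod * of a) : w.prod ∈ (of : G i →* CoprodI G).range := by
  by_cases hfst : w.fstIdx = some i
  · obtain ⟨m, w', hlen, hw⟩ := exists_prod_eq_of_mul_of_fstIdx_eq hfst
    have h' : of (m⁻¹ * b * m) * w'.prod = w'.prod * of a := by
      calc of (m⁻¹ * b * m) * w'.prod = (of m)⁻¹ * (of b * w.prod) := by simp [hw, mul_assoc]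
        _ = w'.prod * of a := by rw [h, hw]; group
    have hb' : m⁻¹ * b * m ≠ 1 := by simpa using (conj_eq_one_iff (a := m⁻¹)).not.mpr hb
    have hw' := prod_mem_range_of_of_mul_eq_mul_of w' ha hb' h'
    rw [hw]
    exact mul_mem ⟨m, rfl⟩ hw'
  by_cases hlast : w.lastIdx = some i
  · obtain ⟨w', m, hlen, hw⟩ := exists_prod_eq_mul_of_of_lastIdx_eq hlast
    have h' : of b * w'.prod = w'.prod * of (m * a * m⁻¹) := by
      calc of b * w'.prod = of b * w.prod * (of m)⁻¹ := by simp [hw, mul_assoc]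
        _ = w'.prod * of (m * a * m⁻¹) := by rw [h, hw]; simp [mul_assoc]
    have hw' := prod_mem_range_of_of_mul_eq_mul_of w' (conj_eq_one_iff.not.mpr ha) hb h'
    rw [hw]
    exact mul_mem hw' ⟨m, rfl⟩
  by_cases hw₀ : w.toList = []
  · simp [prod, hw₀]
  exact absurd h (of_mul_prod_ne_prod_mul_of hb ha w hw₀ hfst hlast)
termination_by w.toList.length

end Group

end Monoid.CoprodI.Word

namespace Monoid.CoprodI

variable {ι : Type*} {G : ι → Type*} [∀ i, Group (G i)]

theorem centralizer_of_le_range_of {i : ι} {a : G i} (ha : a ≠ 1) :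
    Subgroup.centralizer {of a} ≤ (of : G i →* CoprodI G).range := by
  classical
  intro x hx
  obtain ⟨w, rfl⟩ := Word.equiv.symm.surjective x
  exact Word.prod_mem_range_of_of_mul_eq_mul_of w ha ha (hx (of a) rfl)

end Monoid.CoprodI

universe u v

namespace Monoid.Coprod

variable (G₁ : Type u) (G₂ : Type v) [Group G₁] [Group G₂]

/- `CoprodI` needs a family of groups in a single universe, so `G₁ ∗ G₂` is compared with the
free product of the two factors lifted to a common universe. -/
abbrev ULiftSummand (b : Bool) : Type (max u v) :=
  cond b (ULift.{v} G₁) (ULift.{u} G₂)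

instance : ∀ b, Group (ULiftSummand G₁ G₂ b)
  | true => inferInstanceAs (Group (ULift G₁))
  | false => inferInstanceAs (Group (ULift G₂))

def toCoprodI : Coprod G₁ G₂ →* CoprodI (ULiftSummand G₁ G₂) :=
  lift ((CoprodI.of (i := true)).comp MulEquiv.ulift.symm.toMonoidHom)
    ((CoprodI.of (i := false)).comp MulEquiv.ulift.symm.toMonoidHom)

def ofCoprodI : CoprodI (ULiftSummand G₁ G₂) →* Coprod G₁ G₂ :=
  CoprodI.lift fun
    | true => inl.comp MulEquiv.ulift.toMonoidHom
    | false => inr.comp MulEquiv.ulift.toMonoidHom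

variable {G₁ G₂}

theorem ofCoprodI_toCoprodI (x : Coprod G₁ G₂) : ofCoprodI G₁ G₂ (toCoprodI G₁ G₂ x) = x := by
  have h : (ofCoprodI G₁ G₂).comp (toCoprodI G₁ G₂) = MonoidHom.id _ :=
    Coprod.hom_ext (by ext; rfl) (by ext; rfl)
  exact DFunLike.congr_fun h x

theorem toCoprodI_inl (g : G₁) :
    toCoprodI G₁ G₂ (inl g) = CoprodI.of (i := true) (ULift.up g) := by
  rw [toCoprodI, lift_apply_inl]
  rfl

theorem ofCoprodI_of_true (g : ULiftSummand G₁ G₂ true) :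
    ofCoprodI G₁ G₂ (CoprodI.of g) = inl g.down :=
  rfl

end Monoid.Coprod

/-- Let `G₁`, `G₂` be groups and `a ≠ 1` in `G₁`. Then the centralizer of
`inl a` in the free product `G₁ ∗ G₂` is contained in the image of `inl : G₁ →* G₁ ∗ G₂`. -/
theorem centralizer_inl_le_inl_range
    (G₁ G₂ : Type*) [Group G₁] [Group G₂] (a : G₁) (ha : a ≠ 1) :
    Subgroup.centralizer ({Coprod.inl a} : Set (Coprod G₁ G₂)) ≤
      (Coprod.inl : G₁ →* Coprod G₁ G₂).range := by
  intro x hx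
  have hx' : Coprod.toCoprodI G₁ G₂ x ∈ Subgroup.centralizer
      {CoprodI.of (i := true) (ULift.up a : Coprod.ULiftSummand G₁ G₂ true)} := by
    rintro - rfl
    rw [← Coprod.toCoprodI_inl, ← map_mul, ← map_mul, hx _ rfl]
  obtain ⟨g, hg⟩ := CoprodI.centralizer_of_le_range_of (fun h => ha (congrArg ULift.down h)) hx'
  exact ⟨g.down, by rw [← Coprod.ofCoprodI_of_true, hg, Coprod.ofCoprodI_toCoprodI]⟩
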